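/- Let p ≥ 1 be an integer and θ > 0, let (x, λ, y) be a global solution of the closed-loop control system on [0, ∞) with λ nondecreasing, assume dom(A) = {z : A z ≠ ∅} is bounded, and assume 0 ∈ A z* for some z* ∈ H. For t > 0 define the ergodic iterate z̃(t) = (∫₀ᵗ λ(s) ds)^{-1} · ∫₀ᵗ λ(s) y(s) ds. Then: (a) for every z ∈ dom(A), every ξ ∈ A z, and every t > 0, ⟪ξ, z̃(t) − z⟫ ≤ ‖x(0) − z‖²/(2 ∫₀ᵗ λ(s) ds); and (b) there exists a constant C > 0 such that gap(z̃(t)) ≤ C·t^{−(p+1)/2} for all t > 0. -/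

import Mathlib

/-!
Along a trajectory, `u ↦ ‖x u - z‖² / 2` is a Lyapunov function: the resolvent inclusion and the
monotonicity of `A` give `d/du ‖x - z‖² / 2 + λ ⟪ξ, y - z⟫ + ‖y - x‖² ≤ 0` for every `ξ ∈ A z`.
Integrating and averaging against the weights `λ` gives (a). For a zero `z` of `A` it gives the
energy bound `∫₀ᵗ ‖y - x‖² ≤ ‖x 0 - z‖² / 2`, which together with `λ ‖y - x‖^{p-1} = θ` and the
monotonicity of `λ` forces `λ(t) ≳ t^{(p-1)/2}`, hence `∫₀ᵗ λ ≳ t^{(p+1)/2}`. As `dom A` is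
bounded, (a) then bounds the gap uniformly.
-/

open scoped Pointwise
open RealInnerProductSpace Filter Topology Set Metric

/-- A solution of the closed-loop control system on the time set `T`:
`x` is continuously differentiable with `x'(t) = y(t) - x(t)`,
`y(t)` is the resolvent point `(I + λ(t)A)⁻¹ x(t)` (i.e. `x(t) - y(t) ∈ λ(t) • A (y t)`),
`λ` is continuous and positive, and the algebraic equation
`λ(t) ‖y(t) - x(t)‖^{p-1} = θ` holds. -/
def IsCLSolution {H : Type*} [NormedAddCommGroup H] [InnerProductSpace ℝ H]
    (A : H → Set H) (p : ℕ) (θ : ℝ) (T : Set ℝ)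
    (x : ℝ → H) (lam : ℝ → ℝ) (y : ℝ → H) : Prop :=
  (∀ t ∈ T, 0 < lam t) ∧ ContinuousOn lam T ∧
  (∀ t ∈ T, x t - y t ∈ lam t • A (y t)) ∧
  (∀ t ∈ T, HasDerivWithinAt x (y t - x t) T t) ∧
  ContinuousOn (fun t => y t - x t) T ∧
  (∀ t ∈ T, lam t * ‖y t - x t‖ ^ (p - 1) = θ)

open MeasureTheory

section

variable {H : Type*} [NormedAddCommGroup H] [InnerProductSpace ℝ H]

def IsMonotoneOperator (A : H → Set H) : Prop :=
  ∀ x y u v : H, u ∈ A x → v ∈ A y → 0 ≤ ⟪u - v, x - y⟫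

lemma IsMonotoneOperator.resolvent_inner_add_le_zero {A : H → Set H}
    (hmono : IsMonotoneOperator A) {lam : ℝ} (hlam : 0 ≤ lam) {x y z ξ : H}
    (hres : x - y ∈ lam • A y) (hξ : ξ ∈ A z) :
    lam * ⟪ξ, y - z⟫ + ‖y - x‖ ^ 2 + ⟪y - x, x - z⟫ ≤ 0 := by
  obtain ⟨a, ha, hxy : lam • a = x - y⟩ := hres
  have hpair : 0 ≤ lam * ⟪a - ξ, y - z⟫ := mul_nonneg hlam (hmono _ _ _ _ ha hξ)
  rw [← real_inner_smul_left, smul_sub, hxy, inner_sub_left, real_inner_smul_left] at hpair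
  have hsplit : ⟪x - y, y - z⟫ = -(‖y - x‖ ^ 2 + ⟪y - x, x - z⟫) := by
    rw [show x - y = -(y - x) by abel, show y - z = (y - x) + (x - z) by abel, inner_neg_left,
      inner_add_right, real_inner_self_eq_norm_sq]
  linarith

lemma integral_le_half_norm_sq_of_hasDerivWithinAt {x v : ℝ → H} {f : ℝ → ℝ} (z : H)
    (hx : ∀ s ∈ Ici (0 : ℝ), HasDerivWithinAt x (v s) (Ici 0) s)
    (hf : ContinuousOn f (Ici 0)) (hle : ∀ s ∈ Ici (0 : ℝ), f s + ⟪v s, x s - z⟫ ≤ 0)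
    {t : ℝ} (ht : 0 ≤ t) :
    ∫ s in (0 : ℝ)..t, f s ≤ ‖x 0 - z‖ ^ 2 / 2 := by
  set g : ℝ → ℝ := fun u => ‖x u - z‖ ^ 2 / 2 + ∫ s in (0 : ℝ)..u, f s
  have hIcc : Icc 0 t ⊆ Ici (0 : ℝ) := Icc_subset_Ici_self
  have hg_cont : ContinuousOn g (Icc 0 t) := by
    have hxc : ContinuousOn x (Icc 0 t) := fun s hs => (hx s (hIcc hs)).continuousWithinAt.mono hIcc
    refine (((hxc.sub continuousOn_const).norm.pow 2).div_const 2).add ?_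
    have hfi : IntegrableOn f (uIcc 0 t) := by
      rw [uIcc_of_le ht]
      exact (hf.mono hIcc).integrableOn_compact isCompact_Icc
    simpa only [uIcc_of_le ht] using intervalIntegral.continuousOn_primitive_interval hfi
  have hg_deriv : ∀ s ∈ interior (Icc 0 t),
      HasDerivWithinAt g (f s + ⟪v s, x s - z⟫) (interior (Icc 0 t)) s := by
    intro s hs
    rw [interior_Icc] at hs
    have hnhds : Ici (0 : ℝ) ∈ 𝓝 s := Ici_mem_nhds hs.1
    have hnorm : HasDerivAt (fun u => ‖x u - z‖ ^ 2 / 2) ⟪v s, x s - z⟫ s := by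
      refine ((((hx s hs.1.le).hasDerivAt hnhds).sub_const z).norm_sq.div_const 2).congr_deriv ?_
      rw [real_inner_comm]
      ring
    have hprim : HasDerivAt (fun u => ∫ s in (0 : ℝ)..u, f s) (f s) s :=
      intervalIntegral.integral_hasDerivAt_right
        (hf.mono (by rw [uIcc_of_le hs.1.le]; exact Icc_subset_Ici_self)).intervalIntegrable
        ((hf.mono Ioi_subset_Ici_self).stronglyMeasurableAtFilter isOpen_Ioi s hs.1)
        (hf.continuousAt hnhds)
    rw [add_comm]
    exact (hnorm.add hprim).hasDerivWithinAt
  have hanti : g t ≤ g 0 :=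
    antitoneOn_of_hasDerivWithinAt_nonpos (convex_Icc 0 t) hg_cont hg_deriv
      (fun s hs => hle s (interior_subset hs).1) (left_mem_Icc.2 ht) (right_mem_Icc.2 ht) ht
  simp only [g, intervalIntegral.integral_same, add_zero] at hanti
  linarith [sq_nonneg ‖x t - z‖]

lemma inner_smul_integral_sub [CompleteSpace H] {w : ℝ → ℝ} {y : ℝ → H} {a b : ℝ}
    (hw : IntervalIntegrable w volume a b)
    (hwy : IntervalIntegrable (fun s => w s • y s) volume a b)
    (hL : ∫ s in a..b, w s ≠ 0) (ξ z : H) :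
    ⟪ξ, (∫ s in a..b, w s)⁻¹ • (∫ s in a..b, w s • y s) - z⟫
      = (∫ s in a..b, w s)⁻¹ * ∫ s in a..b, w s * ⟪ξ, y s - z⟫ := by
  have hwz : IntervalIntegrable (fun s => w s • z) volume a b :=
    ⟨hw.1.smul_const z, hw.2.smul_const z⟩
  have hwyz : IntervalIntegrable (fun s => w s • (y s - z)) volume a b := by
    simpa only [smul_sub] using hwy.sub hwz
  have hcenter : (∫ s in a..b, w s)⁻¹ • (∫ s in a..b, w s • y s) - z
      = (∫ s in a..b, w s)⁻¹ • ∫ s in a..b, w s • (y s - z) := by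
    simp only [smul_sub]
    rw [intervalIntegral.integral_sub hwy hwz,
      intervalIntegral.integral_smul_const, smul_sub, smul_smul, inv_mul_cancel₀ hL, one_smul]
  have hcomm := (innerSL ℝ ξ).intervalIntegral_comp_comm hwyz
  simp only [innerSL_apply_apply, real_inner_smul_right] at hcomm
  rw [hcenter, real_inner_smul_right, ← hcomm]

end

lemma MonotoneOn.half_mul_le_integral {f : ℝ → ℝ} {t : ℝ} (hf : MonotoneOn f (Icc 0 t))
    (hf0 : 0 ≤ f 0) (ht : 0 ≤ t) :
    t / 2 * f (t / 2) ≤ ∫ s in (0 : ℝ)..t, f s := by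
  have ht2 : 0 ≤ t / 2 := by linarith
  have hhalf : t / 2 ∈ Icc 0 t := ⟨ht2, by linarith⟩
  have hint₁ : IntervalIntegrable f volume 0 (t / 2) :=
    (hf.mono (by rw [uIcc_of_le ht2]; exact Icc_subset_Icc_right hhalf.2)).intervalIntegrable
  have hint₂ : IntervalIntegrable f volume (t / 2) t :=
    (hf.mono (by rw [uIcc_of_le hhalf.2]; exact Icc_subset_Icc_left ht2)).intervalIntegrable
  have hfirst : 0 ≤ ∫ s in (0 : ℝ)..t / 2, f s :=
    intervalIntegral.integral_nonneg ht2 fun s hs =>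
      hf0.trans (hf (left_mem_Icc.2 ht) ⟨hs.1, hs.2.trans hhalf.2⟩ hs.1)
  have hsecond : t / 2 * f (t / 2) ≤ ∫ s in t / 2..t, f s := by
    have h := intervalIntegral.integral_mono_on hhalf.2 intervalIntegrable_const hint₂
      fun s hs => hf hhalf ⟨ht2.trans hs.1, hs.2⟩ hs.1
    simpa only [intervalIntegral.integral_const, smul_eq_mul, show t - t / 2 = t / 2 by ring]
      using h
  rw [← intervalIntegral.integral_add_adjacent_intervals hint₁ hint₂]
  linarith

lemma pow_sub_one_eq_sq_rpow {a : ℝ} (ha : 0 ≤ a) {p : ℕ} (hp : 1 ≤ p) :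
    a ^ (p - 1) = (a ^ 2) ^ (((p : ℝ) - 1) / 2) := by
  calc a ^ (p - 1) = a ^ (((p - 1 : ℕ) : ℝ)) := (Real.rpow_natCast a _).symm
    _ = a ^ ((2 : ℝ) * (((p : ℝ) - 1) / 2)) := by rw [Nat.cast_sub hp]; ring_nf
    _ = (a ^ 2) ^ (((p : ℝ) - 1) / 2) := by rw [Real.rpow_mul ha, Real.rpow_two]

namespace IsCLSolution

variable {H : Type*} [NormedAddCommGroup H] [InnerProductSpace ℝ H] {A : H → Set H} {p : ℕ}
  {θ : ℝ} {x : ℝ → H} {lam : ℝ → ℝ} {y : ℝ → H}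

lemma continuousOn_resolvent (hsol : IsCLSolution A p θ (Ici 0) x lam y) :
    ContinuousOn y (Ici 0) := by
  obtain ⟨-, -, -, hderiv, hymx, -⟩ := hsol
  have hxc : ContinuousOn x (Ici 0) := fun s hs => (hderiv s hs).continuousWithinAt
  exact (hymx.add hxc).congr fun s _ => (sub_add_cancel (y s) (x s)).symm

lemma integral_lam_mul_inner_le
    (hmono : IsMonotoneOperator A) (hsol : IsCLSolution A p θ (Ici 0) x lam y) {z ξ : H}
    (hξ : ξ ∈ A z) {t : ℝ} (ht : 0 ≤ t) :
    ∫ s in (0 : ℝ)..t, lam s * ⟪ξ, y s - z⟫ ≤ ‖x 0 - z‖ ^ 2 / 2 := by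
  have hyc := hsol.continuousOn_resolvent
  obtain ⟨hpos, hlamc, hres, hderiv, -, -⟩ := hsol
  refine integral_le_half_norm_sq_of_hasDerivWithinAt (f := fun s => lam s * ⟪ξ, y s - z⟫) z
    hderiv (hlamc.mul (continuousOn_const.inner (hyc.sub continuousOn_const))) (fun s hs => ?_) ht
  linarith [hmono.resolvent_inner_add_le_zero (hpos s hs).le (hres s hs) hξ, sq_nonneg ‖y s - x s‖]

lemma integral_norm_sq_le
    (hmono : IsMonotoneOperator A) (hsol : IsCLSolution A p θ (Ici 0) x lam y) {z : H}
    (hz : 0 ∈ A z) {t : ℝ} (ht : 0 ≤ t) :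
    ∫ s in (0 : ℝ)..t, ‖y s - x s‖ ^ 2 ≤ ‖x 0 - z‖ ^ 2 / 2 := by
  obtain ⟨hpos, -, hres, hderiv, hymx, -⟩ := hsol
  refine integral_le_half_norm_sq_of_hasDerivWithinAt (f := fun s => ‖y s - x s‖ ^ 2) z hderiv
    (hymx.norm.pow 2) (fun s hs => ?_) ht
  simpa only [inner_zero_left, mul_zero, zero_add]
    using hmono.resolvent_inner_add_le_zero (hpos s hs).le (hres s hs) hz

lemma integral_lam_pos (hsol : IsCLSolution A p θ (Ici 0) x lam y) {t : ℝ} (ht : 0 < t) :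
    0 < ∫ s in (0 : ℝ)..t, lam s := by
  obtain ⟨hpos, hlamc, -⟩ := hsol
  exact intervalIntegral.intervalIntegral_pos_of_pos_on
    (hlamc.mono (by rw [uIcc_of_le ht.le]; exact Icc_subset_Ici_self)).intervalIntegrable
    (fun s hs => hpos s hs.1.le) ht

lemma inner_ergodic_sub_le [CompleteSpace H]
    (hmono : IsMonotoneOperator A) (hsol : IsCLSolution A p θ (Ici 0) x lam y) {z ξ : H}
    (hξ : ξ ∈ A z) {t : ℝ} (ht : 0 < t) :
    ⟪ξ, ((∫ s in (0 : ℝ)..t, lam s)⁻¹ • ∫ s in (0 : ℝ)..t, lam s • y s) - z⟫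
      ≤ ‖x 0 - z‖ ^ 2 / (2 * ∫ s in (0 : ℝ)..t, lam s) := by
  have hsub : uIcc 0 t ⊆ Ici (0 : ℝ) := by rw [uIcc_of_le ht.le]; exact Icc_subset_Ici_self
  have hL := hsol.integral_lam_pos ht
  have hlamc : ContinuousOn lam (Ici 0) := hsol.2.1
  rw [inner_smul_integral_sub (hlamc.mono hsub).intervalIntegrable
    ((hlamc.smul hsol.continuousOn_resolvent).mono hsub).intervalIntegrable hL.ne',
    ← div_div, inv_mul_eq_div]
  gcongr
  exact hsol.integral_lam_mul_inner_le hmono hξ ht.le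

/-- Since `λ` is nondecreasing, `‖y - x‖^{p-1} = θ / λ ≥ θ / λ(t)` on `[0, t]`; integrating the
squared residual against the energy bound `E` turns this into a lower bound for `λ(t)`. -/
lemma mul_rpow_le_lam_mul_rpow (hsol : IsCLSolution A p θ (Ici 0) x lam y) (hp : 1 ≤ p)
    (hlam : MonotoneOn lam (Ici 0)) {E t : ℝ} (ht : 0 < t)
    (hE : ∫ s in (0 : ℝ)..t, ‖y s - x s‖ ^ 2 ≤ E) :
    θ * t ^ (((p : ℝ) - 1) / 2) ≤ lam t * E ^ (((p : ℝ) - 1) / 2) := by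
  obtain ⟨hpos, -, -, -, hymx, heq⟩ := hsol
  set q : ℝ := ((p : ℝ) - 1) / 2
  rcases hp.eq_or_lt with rfl | hp2
  · simpa [q] using (heq t ht.le).symm.le
  have hq : 0 < q := by
    have : (2 : ℝ) ≤ p := by exact_mod_cast hp2
    simp only [q]
    linarith
  have hlt := hpos t ht.le
  have hresid : ∀ s ∈ Ici (0 : ℝ), ‖y s - x s‖ ^ (p - 1) = θ / lam s := fun s hs =>
    eq_div_of_mul_eq (hpos s hs).ne' ((mul_comm _ _).trans (heq s hs))
  have hθ : 0 ≤ θ := by rw [← heq t ht.le]; positivity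
  set b := θ / lam t
  have hb : 0 ≤ b := by positivity
  have hpointwise : ∀ s ∈ Icc 0 t, b ^ q⁻¹ ≤ ‖y s - x s‖ ^ 2 := by
    intro s hs
    rw [Real.rpow_inv_le_iff_of_pos hb (sq_nonneg _) hq,
      ← pow_sub_one_eq_sq_rpow (norm_nonneg _) hp, hresid s hs.1]
    exact div_le_div_of_nonneg_left hθ (hpos s hs.1) (hlam hs.1 ht.le hs.2)
  have hsq_int : IntervalIntegrable (fun s => ‖y s - x s‖ ^ 2) volume 0 t :=
    ((hymx.norm.pow 2).mono
      (by rw [uIcc_of_le ht.le]; exact Icc_subset_Ici_self)).intervalIntegrable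
  have hmass : t * b ^ q⁻¹ ≤ E := by
    have h := intervalIntegral.integral_mono_on ht.le intervalIntegrable_const hsq_int hpointwise
    simp only [intervalIntegral.integral_const, sub_zero, smul_eq_mul] at h
    linarith
  have hE0 : 0 ≤ E := le_trans (by positivity) hmass
  have hbE : b ≤ E ^ q / t ^ q := by
    rw [← Real.div_rpow hE0 ht.le, ← Real.rpow_inv_le_iff_of_pos hb (by positivity) hq,
      le_div_iff₀ ht]
    linarith
  rw [div_le_div_iff₀ hlt (by positivity)] at hbE
  linarith

lemma exists_rpow_le_integral_lam
    (hmono : IsMonotoneOperator A) (hsol : IsCLSolution A p θ (Ici 0) x lam y) (hp : 1 ≤ p)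
    (hθ : 0 < θ) (hlam : MonotoneOn lam (Ici 0)) {z : H} (hz : 0 ∈ A z) :
    ∃ c > 0, ∀ t > 0, c * t ^ (((p : ℝ) + 1) / 2) ≤ ∫ s in (0 : ℝ)..t, lam s := by
  set q : ℝ := ((p : ℝ) - 1) / 2
  set E : ℝ := ‖x 0 - z‖ ^ 2 / 2 + 1
  have hE : 0 < E := by positivity
  refine ⟨θ / (2 ^ (q + 1) * E ^ q), by positivity, fun t ht => ?_⟩
  have ht2 : 0 < t / 2 := half_pos ht
  have hlam_half : θ * (t / 2) ^ q ≤ lam (t / 2) * E ^ q :=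
    hsol.mul_rpow_le_lam_mul_rpow hp hlam ht2
      ((hsol.integral_norm_sq_le hmono hz ht2.le).trans (le_add_of_nonneg_right zero_le_one))
  have hEq : 0 < E ^ q := by positivity
  calc θ / (2 ^ (q + 1) * E ^ q) * t ^ (((p : ℝ) + 1) / 2)
      = t / 2 * (θ * (t / 2) ^ q) / E ^ q := by
        rw [show ((p : ℝ) + 1) / 2 = q + 1 by ring, Real.div_rpow ht.le zero_le_two,
          Real.rpow_add_one ht.ne', Real.rpow_add_one two_ne_zero]
        field_simp
    _ ≤ t / 2 * lam (t / 2) := by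
        rw [div_le_iff₀ hEq, mul_assoc]
        gcongr
    _ ≤ ∫ s in (0 : ℝ)..t, lam s :=
        (hlam.mono Icc_subset_Ici_self).half_mul_le_integral (hsol.1 0 self_mem_Ici).le ht.le

end IsCLSolution

/-- Ergodic rate: with `dom(A)` bounded, the ergodic iterate
`z̃(t) = (∫₀ᵗ λ)⁻¹ ∫₀ᵗ λ(s) y(s) ds` satisfies, for every `z ∈ dom(A)`, `ξ ∈ A z`,
`⟪ξ, z̃(t) - z⟫ ≤ ‖x(0) - z‖²/(2∫₀ᵗ λ)`, and `gap(z̃(t)) = O(t^{-(p+1)/2})`. -/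
theorem stmt_13 {H : Type*} [NormedAddCommGroup H] [InnerProductSpace ℝ H] [CompleteSpace H]
    (A : H → Set H)
    (hmono : ∀ x y u v : H, u ∈ A x → v ∈ A y → 0 ≤ ⟪u - v, x - y⟫)
    (p : ℕ) (hp : 1 ≤ p) (θ : ℝ) (hθ : 0 < θ)
    (x : ℝ → H) (lam : ℝ → ℝ) (y : ℝ → H)
    (hsol : IsCLSolution A p θ (Ici 0) x lam y)
    (hlam : MonotoneOn lam (Ici 0))
    (hbdd : Bornology.IsBounded {z : H | (A z).Nonempty})
    (hzero : ∃ z : H, 0 ∈ A z) :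
    (∀ z ξ : H, ξ ∈ A z → ∀ t : ℝ, 0 < t →
        ⟪ξ, ((∫ s in (0 : ℝ)..t, lam s)⁻¹ • ∫ s in (0 : ℝ)..t, lam s • y s) - z⟫
          ≤ ‖x 0 - z‖ ^ 2 / (2 * ∫ s in (0 : ℝ)..t, lam s))
    ∧ ∃ C : ℝ, 0 < C ∧ ∀ t : ℝ, 0 < t →
        sSup {r : ℝ | ∃ z ξ : H, ξ ∈ A z ∧
            r = ⟪ξ, ((∫ s in (0 : ℝ)..t, lam s)⁻¹ • ∫ s in (0 : ℝ)..t, lam s • y s) - z⟫}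
          ≤ C * t ^ (-(((p : ℝ) + 1) / 2)) := by
  refine ⟨fun z ξ hξ t ht => hsol.inner_ergodic_sub_le hmono hξ ht, ?_⟩
  obtain ⟨zs, hzs⟩ := hzero
  obtain ⟨c, hc, hgrowth⟩ := hsol.exists_rpow_le_integral_lam hmono hp hθ hlam hzs
  obtain ⟨r, hr, hdom⟩ := hbdd.subset_closedBall_lt 0 (x 0)
  refine ⟨r ^ 2 / (2 * c), by positivity, fun t ht => Real.sSup_le ?_ (by positivity)⟩
  rintro _ ⟨z, ξ, hξ, rfl⟩
  have hz : ‖x 0 - z‖ ≤ r := by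
    simpa only [mem_closedBall, dist_eq_norm, norm_sub_rev] using hdom ⟨ξ, hξ⟩
  have hgrowth_t := hgrowth t ht
  calc _ ≤ ‖x 0 - z‖ ^ 2 / (2 * ∫ s in (0 : ℝ)..t, lam s) := hsol.inner_ergodic_sub_le hmono hξ ht
    _ ≤ r ^ 2 / (2 * (c * t ^ (((p : ℝ) + 1) / 2))) := by gcongr
    _ = r ^ 2 / (2 * c) * t ^ (-(((p : ℝ) + 1) / 2)) := by
        rw [Real.rpow_neg ht.le]
        field_simp
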